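/- Let P be a real trigonometric polynomial of degree at most n, let I be a closed bounded interval of length r, let m ≥ 2, and suppose P has at least m zeros in I counting multiplicities. Then max_{θ∈I} |P'(θ)| ≤ (4er/(m−1))^{m−1} · max_{x∈I} |P^{(m)}(x)|. -/

import Mathlib

/-!
A zero of multiplicity `μ` of `f` is a zero of multiplicity `μ - 1` of `f'`, and Rolle's theorem
gives a further zero of `f'` strictly between any two consecutive distinct zeros of `f`. So `k + 1`
zeros of `f` in an interval, counted with multiplicity, give `k` zeros of `f'` there and, iterating,
a zero of `f⁽ᵏ⁾`. If a smooth `f` has `k` zeros `Z` in `I` and `θ ∈ I`, apply this to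
`f - c ∏_{z ∈ Z} (x - z)`, with `c` chosen so that it also vanishes at `θ`: its `k`-th derivative
`f⁽ᵏ⁾ - c k!` vanishes at some `ξ ∈ I`, which is the interpolation error formula
`f θ = f⁽ᵏ⁾(ξ) / k! · ∏ (θ - z)`. Hence `|f θ| ≤ r^k / k! · max_I |f⁽ᵏ⁾|`; take `f = P'`,
`k = m - 1` and use `k! ≥ (k / e)^k`.
-/

open Real

/-- `P` has at least `m` zeros in `I`, counting multiplicities. -/
def HasZerosWithMult (P : ℝ → ℝ) (I : Set ℝ) (m : ℕ) : Prop :=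
  ∃ (k : ℕ) (y : Fin k → ℝ) (mult : Fin k → ℕ),
    Function.Injective y ∧ (∀ i, y i ∈ I) ∧ (∀ i, 0 < mult i) ∧
    (∑ i, mult i) = m ∧ ∀ i : Fin k, ∀ j < mult i, iteratedDeriv j P (y i) = 0

open Polynomial Set
open scoped Nat ContDiff

theorem exists_interlacing_zeros_deriv {f : ℝ → ℝ} (hf : Continuous f) (S : Finset ℝ)
    (hS : ∀ x ∈ S, f x = 0) :
    ∃ T : Finset ℝ, T.card = S.card - 1 ∧ Disjoint S T ∧ (∀ x ∈ T, deriv f x = 0) ∧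
      ∀ x ∈ T, (∃ y ∈ S, y < x) ∧ ∃ y ∈ S, x < y := by
  induction S using Finset.induction_on_max with
  | empty => exact ⟨∅, by simp⟩
  | insert a S ha ih =>
    obtain ⟨T, hcard, hdisj, hT, hbetween⟩ := ih fun x hx => hS x (Finset.mem_insert_of_mem hx)
    rcases S.eq_empty_or_nonempty with rfl | hne
    · exact ⟨∅, by simp⟩
    have hb := S.max'_mem hne
    obtain ⟨z, ⟨hbz, hza⟩, hz⟩ := exists_deriv_eq_zero (ha _ hb) hf.continuousOn
      (by rw [hS a (Finset.mem_insert_self a S), hS _ (Finset.mem_insert_of_mem hb)])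
    have hTb : ∀ x ∈ T, x < S.max' hne := fun x hx => by
      obtain ⟨y, hy, hxy⟩ := (hbetween x hx).2
      exact hxy.trans_le (S.le_max' y hy)
    have hzT : z ∉ T := fun h => (hTb z h).not_gt hbz
    have hzS : z ∉ S := fun h => (S.le_max' z h).not_gt hbz
    have haT : a ∉ insert z T := by
      simp only [Finset.mem_insert, not_or]
      exact ⟨hza.ne', fun h => (hTb a h).not_gt (ha _ hb)⟩
    refine ⟨insert z T, ?_, ?_, ?_, ?_⟩
    · rw [Finset.card_insert_of_notMem hzT, Finset.card_insert_of_notMem (fun h => (ha a h).false),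
        hcard]
      have := hne.card_pos
      omega
    · rw [Finset.disjoint_insert_left, Finset.disjoint_insert_right]
      exact ⟨haT, hzS, hdisj⟩
    · simpa [hz] using hT
    · simp only [Finset.mem_insert, forall_eq_or_imp]
      refine ⟨⟨⟨_, .inr hb, hbz⟩, a, .inl rfl, hza⟩, fun x hx => ?_⟩
      obtain ⟨⟨y, hy, hyx⟩, y', hy', hxy'⟩ := hbetween x hx
      exact ⟨⟨y, .inr hy, hyx⟩, y', .inr hy', hxy'⟩

def VanishesWithMult (f : ℝ → ℝ) (Z : Multiset ℝ) : Prop :=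
  ∀ x, ∀ j < Z.count x, iteratedDeriv j f x = 0

namespace VanishesWithMult

variable {f : ℝ → ℝ} {Z Z' : Multiset ℝ} {I : Set ℝ}

theorem apply_eq_zero (hZ : VanishesWithMult f Z) {x : ℝ} (hx : x ∈ Z) : f x = 0 := by
  simpa using hZ x 0 (Multiset.count_pos.2 hx)

theorem of_finset {T : Finset ℝ} (hT : ∀ x ∈ T, f x = 0) : VanishesWithMult f T.val := by
  intro x j hj
  have hx : x ∈ T := Multiset.count_pos.1 (pos_of_gt hj)
  rw [Multiset.count_eq_one_of_mem T.nodup hx, Nat.lt_one_iff] at hj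
  simpa [hj] using hT x hx

theorem add (hZ : VanishesWithMult f Z) (hZ' : VanishesWithMult f Z') (h : Disjoint Z Z') :
    VanishesWithMult f (Z + Z') := by
  intro x j hj
  rw [Multiset.count_add] at hj
  by_cases hx : x ∈ Z
  · rw [Multiset.count_eq_zero.2 (Multiset.disjoint_left.1 h hx)] at hj
    exact hZ x j hj
  · rw [Multiset.count_eq_zero.2 hx] at hj
    exact hZ' x j (by omega)

theorem deriv_sub_dedup (hZ : VanishesWithMult f Z) : VanishesWithMult (deriv f) (Z - Z.dedup) := by
  intro x j hj
  rw [Multiset.count_sub, Multiset.count_dedup] at hj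
  rw [← iteratedDeriv_succ']
  split_ifs at hj with hx
  · exact hZ x (j + 1) (by omega)
  · simp [Multiset.count_eq_zero.2 hx] at hj

theorem exists_deriv_vanishesWithMult (hf : Continuous f) (hZ : VanishesWithMult f Z)
    (hI : I.OrdConnected) (hZI : ∀ x ∈ Z, x ∈ I) :
    ∃ Z' : Multiset ℝ, Z'.card = Z.card - 1 ∧ (∀ x ∈ Z', x ∈ I) ∧
      VanishesWithMult (deriv f) Z' := by
  obtain ⟨T, hcard, hdisj, hT, hbetween⟩ := exists_interlacing_zeros_deriv hf Z.toFinset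
    fun x hx => hZ.apply_eq_zero (Multiset.mem_toFinset.1 hx)
  have hTZ : ∀ x ∈ T.val, x ∉ Z := fun x hx hxZ =>
    Finset.disjoint_left.1 hdisj (Multiset.mem_toFinset.2 hxZ) hx
  refine ⟨Z - Z.dedup + T.val, ?_, ?_, ?_⟩
  · have hded : Z.dedup.card ≤ Z.card := Multiset.card_le_card (Multiset.dedup_le Z)
    have hpos : Z.card = 0 ∨ 0 < Z.dedup.card := by
      rcases Z.empty_or_exists_mem with rfl | ⟨x, hx⟩
      · simp
      · exact .inr (Multiset.card_pos_iff_exists_mem.2 ⟨x, Multiset.mem_dedup.2 hx⟩)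
    rw [Multiset.card_add, Multiset.card_sub (Multiset.dedup_le Z), Finset.card_val, hcard,
      Multiset.card_toFinset]
    omega
  · intro x hx
    rcases Multiset.mem_add.1 hx with hx | hx
    · exact hZI x (Multiset.mem_of_le (Multiset.sub_le_self _ _) hx)
    · obtain ⟨⟨y, hy, hyx⟩, y', hy', hxy'⟩ := hbetween x hx
      exact hI.out (hZI y (Multiset.mem_toFinset.1 hy)) (hZI y' (Multiset.mem_toFinset.1 hy'))
        ⟨hyx.le, hxy'.le⟩
  · exact hZ.deriv_sub_dedup.add (of_finset hT) (Multiset.disjoint_right.2 fun hx hxZ =>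
      hTZ _ hx (Multiset.mem_of_le (Multiset.sub_le_self _ _) hxZ))

theorem exists_iteratedDeriv_eq_zero {k : ℕ} (hf : ContDiff ℝ k f) (hZ : VanishesWithMult f Z)
    (hcard : Z.card = k + 1) (hI : I.OrdConnected) (hZI : ∀ x ∈ Z, x ∈ I) :
    ∃ ξ ∈ I, iteratedDeriv k f ξ = 0 := by
  induction k generalizing f Z with
  | zero =>
    obtain ⟨x, hx⟩ := Multiset.card_pos_iff_exists_mem.1 (by rw [hcard]; omega)
    exact ⟨x, hZI x hx, by simpa using hZ.apply_eq_zero hx⟩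
  | succ k ih =>
    obtain ⟨Z', hcard', hZ'I, hZ'⟩ := hZ.exists_deriv_vanishesWithMult hf.continuous hI hZI
    obtain ⟨ξ, hξ, h⟩ := ih (ContDiff.deriv' (by exact_mod_cast hf)) hZ' (by omega) hZ'I
    exact ⟨ξ, hξ, by rwa [iteratedDeriv_succ']⟩

end VanishesWithMult

theorem HasZerosWithMult.exists_vanishesWithMult {P : ℝ → ℝ} {I : Set ℝ} {m : ℕ}
    (h : HasZerosWithMult P I m) :
    ∃ Z : Multiset ℝ, Z.card = m ∧ (∀ x ∈ Z, x ∈ I) ∧ VanishesWithMult P Z := by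
  obtain ⟨k, y, mult, hinj, hyI, -, hsum, hzero⟩ := h
  refine ⟨∑ i, Multiset.replicate (mult i) (y i), by simp [Multiset.card_sum, hsum], ?_, ?_⟩
  · intro x hx
    obtain ⟨i, -, hi⟩ := Multiset.mem_sum.1 hx
    exact Multiset.eq_of_mem_replicate hi ▸ hyI i
  · intro x j hj
    obtain ⟨i, -, hi⟩ := Multiset.mem_sum.1 (Multiset.count_pos.1 (pos_of_gt hj))
    obtain rfl := Multiset.eq_of_mem_replicate hi
    rw [Multiset.count_sum', Finset.sum_eq_single i (fun i' _ hi' => by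
      simp [Multiset.count_replicate, hinj.ne hi']) (by simp)] at hj
    exact hzero i j (by simpa using hj)

theorem Polynomial.iteratedDeriv_eval (p : ℝ[X]) (j : ℕ) :
    iteratedDeriv j (fun x => p.eval x) = fun x => (derivative^[j] p).eval x := by
  induction j generalizing p with
  | zero => simp
  | succ j ih =>
    rw [iteratedDeriv_succ', Function.iterate_succ_apply, ← ih]
    congr 1
    ext x
    exact p.deriv

theorem Polynomial.Monic.iterate_derivative_natDegree {R : Type*} [CommSemiring R] {p : R[X]}
    (hp : p.Monic) : derivative^[p.natDegree] p = C (p.natDegree ! : R) := by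
  rw [eq_C_of_natDegree_le_zero ((natDegree_iterate_derivative p _).trans (by omega)),
    coeff_iterate_derivative, zero_add, Nat.descFactorial_self, hp.coeff_natDegree, nsmul_one]

theorem vanishesWithMult_prod_X_sub_C (Z : Multiset ℝ) :
    VanishesWithMult (fun x => (Z.map fun a => X - C a).prod.eval x) Z := by
  intro x j hj
  rw [Polynomial.iteratedDeriv_eval]
  refine isRoot_iterate_derivative_of_lt_rootMultiplicity ?_
  rwa [← count_roots, roots_multiset_prod_X_sub_C]

theorem Polynomial.iterate_derivative_multiset_prod_X_sub_C (Z : Multiset ℝ) :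
    derivative^[Z.card] (Z.map fun a => X - C a).prod = C (Z.card ! : ℝ) := by
  have hmonic : (Z.map fun a => X - C a).prod.Monic :=
    monic_multiset_prod_of_monic _ _ fun a _ => monic_X_sub_C a
  simpa [natDegree_multiset_prod_X_sub_C_eq_card] using hmonic.iterate_derivative_natDegree

theorem VanishesWithMult.exists_eq_iteratedDeriv_mul_prod {f : ℝ → ℝ} {Z : Multiset ℝ}
    (hf : ContDiff ℝ Z.card f) (hZ : VanishesWithMult f Z) {I : Set ℝ} (hI : I.OrdConnected)
    (hZI : ∀ x ∈ Z, x ∈ I) {θ : ℝ} (hθ : θ ∈ I) :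
    ∃ ξ ∈ I, f θ = iteratedDeriv Z.card f ξ / Z.card ! * (Z.map (θ - ·)).prod := by
  set p := (Z.map fun a => X - C a).prod
  have hpθ : p.eval θ = (Z.map (θ - ·)).prod := by simp [p, eval_multiset_prod, Multiset.map_map]
  by_cases hθZ : θ ∈ Z
  · refine ⟨θ, hθ, ?_⟩
    rw [hZ.apply_eq_zero hθZ, Multiset.prod_eq_zero (Multiset.mem_map.2 ⟨θ, hθZ, sub_self θ⟩),
      mul_zero]
  have hpθ0 : p.eval θ ≠ 0 := by
    rw [hpθ, Ne, Multiset.prod_eq_zero_iff]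
    simpa [sub_eq_zero, eq_comm] using hθZ
  set c := f θ / p.eval θ
  have hp : ContDiff ℝ Z.card fun x => c * p.eval x := by
    simpa using contDiff_const.mul (p.contDiff_aeval (𝕜 := ℝ) Z.card)
  have hgZ : VanishesWithMult (fun x => f x - c * p.eval x) (({θ} : Finset ℝ).val + Z) := by
    refine .add (.of_finset ?_) (fun x j hj => ?_) (by simpa using hθZ)
    · simp [c, hpθ0]
    · have hj' : (j : WithTop ℕ∞) ≤ Z.card := by
        exact_mod_cast (hj.trans_le (Multiset.count_le_card x Z)).le
      rw [iteratedDeriv_fun_sub (hf.of_le hj').contDiffAt (hp.of_le hj').contDiffAt,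
        iteratedDeriv_const_mul_field, hZ x j hj, vanishesWithMult_prod_X_sub_C Z x j hj, mul_zero,
        sub_zero]
  obtain ⟨ξ, hξ, hgξ⟩ := hgZ.exists_iteratedDeriv_eq_zero (hf.sub hp) (by simp [add_comm])
    hI (by simpa [or_imp, forall_and] using ⟨hθ, hZI⟩)
  rw [iteratedDeriv_fun_sub hf.contDiffAt hp.contDiffAt, iteratedDeriv_const_mul_field,
    Polynomial.iteratedDeriv_eval] at hgξ
  beta_reduce at hgξ
  rw [iterate_derivative_multiset_prod_X_sub_C, eval_C, sub_eq_zero] at hgξ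
  refine ⟨ξ, hξ, ?_⟩
  rw [hgξ, mul_div_cancel_right₀ _ (by positivity), ← hpθ]
  exact (div_mul_cancel₀ _ hpθ0).symm

theorem abs_prod_map_sub_le_pow_card {Z : Multiset ℝ} {u v θ : ℝ} (hθ : θ ∈ Icc u v)
    (hZ : ∀ x ∈ Z, x ∈ Icc u v) : |(Z.map (θ - ·)).prod| ≤ (v - u) ^ Z.card := by
  have habs : |(Z.map (θ - ·)).prod| = (Z.map fun x => |θ - x|).prod := by
    show absHom _ = _
    rw [map_multiset_prod, Multiset.map_map]
    rfl
  rw [habs]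
  refine (Multiset.prod_map_le_prod_map₀ _ (fun _ => v - u) (fun _ _ => abs_nonneg _)
    fun x hx => ?_).trans_eq (by simp)
  have := hZ x hx
  rw [abs_sub_le_iff]
  constructor <;> linarith [hθ.1, hθ.2, this.1, this.2]

theorem VanishesWithMult.abs_le_pow_div_factorial_mul_sSup {f : ℝ → ℝ} {Z : Multiset ℝ}
    (hf : ContDiff ℝ Z.card f) (hZ : VanishesWithMult f Z) {u v θ : ℝ}
    (hZI : ∀ x ∈ Z, x ∈ Icc u v) (hθ : θ ∈ Icc u v) :
    |f θ| ≤ (v - u) ^ Z.card / Z.card ! *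
      sSup ((fun x => |iteratedDeriv Z.card f x|) '' Icc u v) := by
  obtain ⟨ξ, hξ, hθξ⟩ := hZ.exists_eq_iteratedDeriv_mul_prod hf ordConnected_Icc hZI hθ
  set M := sSup ((fun x => |iteratedDeriv Z.card f x|) '' Icc u v)
  have hξM : |iteratedDeriv Z.card f ξ| ≤ M :=
    le_csSup (isCompact_Icc.bddAbove_image (hf.continuous_iteratedDeriv' _).abs.continuousOn)
      (mem_image_of_mem _ hξ)
  calc |f θ| = |iteratedDeriv Z.card f ξ| / Z.card ! * |(Z.map (θ - ·)).prod| := by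
        rw [hθξ, abs_mul, abs_div, Nat.abs_cast]
    _ ≤ M / Z.card ! * (v - u) ^ Z.card := by
        gcongr
        · exact div_nonneg ((abs_nonneg _).trans hξM) (Nat.cast_nonneg _)
        · exact abs_prod_map_sub_le_pow_card hθ hZI
    _ = _ := by ring

theorem pow_div_factorial_le_exp_one_mul_div_pow {r : ℝ} (hr : 0 ≤ r) (k : ℕ) :
    r ^ k / k ! ≤ (exp 1 * r / k) ^ k := by
  rcases k.eq_zero_or_pos with rfl | hk
  · simp
  have hk' : (0 : ℝ) < k := by exact_mod_cast hk
  calc r ^ k / k ! = (r / k) ^ k * ((k : ℝ) ^ k / k !) := by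
        rw [div_pow, mul_div_assoc', div_mul_cancel₀ _ (pow_ne_zero k hk'.ne')]
    _ ≤ (r / k) ^ k * exp k := by gcongr; exact pow_div_factorial_le_exp _ hk'.le k
    _ = (exp 1 * r / k) ^ k := by rw [← exp_one_pow]; ring

theorem stmt6_general (n m : ℕ) (hm : 2 ≤ m) (a b : ℕ → ℝ) (P : ℝ → ℝ)
    (hP : ∀ x, P x = ∑ k ∈ Finset.range (n + 1),
      (a k * Real.cos (k * x) + b k * Real.sin (k * x)))
    (u v r : ℝ) (hr : r = v - u)
    (hz : HasZerosWithMult P (Set.Icc u v) m) :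
    ∀ θ ∈ Set.Icc u v,
      |deriv P θ| ≤ (4 * Real.exp 1 * r / (m - 1 : ℕ)) ^ (m - 1) *
        sSup ((fun x => |iteratedDeriv m P x|) '' Set.Icc u v) := by
  intro θ hθ
  obtain ⟨k, rfl⟩ : ∃ k, m = k + 1 := ⟨m - 1, by omega⟩
  have hPsmooth : ContDiff ℝ ∞ P := by rw [funext hP]; fun_prop
  obtain ⟨Z, hcard, hZI, hZ⟩ := hz.exists_vanishesWithMult
  obtain ⟨Z', hcard', hZ'I, hZ'⟩ :=
    hZ.exists_deriv_vanishesWithMult hPsmooth.continuous ordConnected_Icc hZI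
  rw [hcard, Nat.add_sub_cancel] at hcard'
  have hbound := hZ'.abs_le_pow_div_factorial_mul_sSup
    ((contDiff_infty_iff_deriv.mp hPsmooth).2.of_le (by exact_mod_cast le_top)) hZ'I hθ
  rw [hcard', ← hr, ← iteratedDeriv_succ'] at hbound
  rw [Nat.add_sub_cancel]
  refine hbound.trans (mul_le_mul_of_nonneg_right ?_
    (Real.sSup_nonneg fun _ ⟨_, _, hx⟩ => hx ▸ abs_nonneg _))
  have hr0 : 0 ≤ r := by linarith [hθ.1, hθ.2]
  refine (pow_div_factorial_le_exp_one_mul_div_pow hr0 k).trans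
    (pow_le_pow_left₀ (by positivity) ?_ k)
  gcongr
  linarith [exp_pos 1]

theorem stmt6 (n m : ℕ) (hm : 2 ≤ m) (a b : ℕ → ℝ) (P : ℝ → ℝ)
    (hP : ∀ x, P x = ∑ k ∈ Finset.range (n + 1),
      (a k * Real.cos (k * x) + b k * Real.sin (k * x)))
    (u v r : ℝ) (huv : u ≤ v) (hr : r = v - u)
    (hz : HasZerosWithMult P (Set.Icc u v) m) :
    ∀ θ ∈ Set.Icc u v,
      |deriv P θ| ≤ (4 * Real.exp 1 * r / (m - 1 : ℕ)) ^ (m - 1) *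
        sSup ((fun x => |iteratedDeriv m P x|) '' Set.Icc u v) :=
  stmt6_general n m hm a b P hP u v r hr hz
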